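/- Let N be a finite player set, (ω,Σ) a weight system on N, and (N,v) a TU-game. For a nonempty T⊆N, write Φ^ω_{iT} for the (ω,Σ)-weighted Shapley value of player i∈T in the subgame v^T induced by T. Then for every nonempty T⊆N and every i∈T: Φ^ω_{iT} = (ω̄^T_i/ω̄^T)·(v(T)−v(T∖{i})) + Σ_{j∈T∖{i}} (ω̄^T_j/ω̄^T)·Φ^ω_{i,T∖{j}}. -/

import Mathlib

/-!
Expand every term in the unanimity coefficients `λ_S`: `v(T) − v(T∖{i})` is the sum of the
`λ_S` with `i ∈ S ⊆ T`, and `Φ^ω_{i,T∖{j}}` keeps exactly the terms with `j ∉ S`. Comparing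
coefficients of `λ_S` (and using `∑_{j ∈ T} ω̄^T_j = ω̄^T`), everything reduces to
`(ω̄^S_i/ω̄^S) · ∑_{j ∈ S} ω̄^T_j = ω̄^T_i` for `i ∈ S ⊆ T`. If `p(S) = p(T)` then `ω̄^T` and
`ω̄^S` agree on `S`; if `p(S) < p(T)` both sides vanish.
-/

open Finset

variable {α : Type*}

noncomputable section

/-- `ω̄^S_i`: the weight of `i` if `i` belongs to the top-priority part `S̄` of `S`, else `0`.
Here the ordered partition `Σ` is encoded by the priority function `p`. -/
def wbar [DecidableEq α] (ω : α → ℝ) (p : α → ℕ) (S : Finset α) (i : α) : ℝ :=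
  if i ∈ S ∧ p i = S.sup p then ω i else 0

/-- `ω̄^S = ∑_{i ∈ S̄} ω_i`. -/
def wbarSum [DecidableEq α] (ω : α → ℝ) (p : α → ℕ) (S : Finset α) : ℝ :=
  ∑ i ∈ S, wbar ω p S i

/-- unanimity coefficients `λ_S(v)` (Harsanyi dividends). -/
def unanimityCoeff [DecidableEq α] (v : Finset α → ℝ) (S : Finset α) : ℝ :=
  ∑ T ∈ S.powerset, (-1 : ℝ) ^ (S.card - T.card) * v T

/-- `Φ^ω_{iM}`: the `(ω,Σ)`-weighted Shapley value of player `i` for the subgame of `v`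
induced by the ground coalition `M` (with the weight system restricted to `M`;
note that `wbar ω p S i = 0` unless `i ∈ S̄`). -/
def wShapley [DecidableEq α] (ω : α → ℝ) (p : α → ℕ) (v : Finset α → ℝ)
    (M : Finset α) (i : α) : ℝ :=
  ∑ S ∈ M.powerset, wbar ω p S i / wbarSum ω p S * unanimityCoeff v S

namespace Finset

variable [DecidableEq α]

theorem sum_Icc_neg_one_pow_card_sub {R : Type*} [Ring R] {s t : Finset α} (h : s ⊆ t) :
    ∑ u ∈ Icc s t, (-1 : R) ^ (u.card - s.card) = if s = t then 1 else 0 := by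
  have hdisj : ∀ u ∈ (t \ s).powerset, Disjoint s u := fun u hu =>
    disjoint_of_subset_right (mem_powerset.mp hu) disjoint_sdiff
  have hinj : Set.InjOn (s ∪ ·) (t \ s).powerset := fun u hu w hw huw => by
    rw [← union_sdiff_cancel_left (hdisj u hu), ← union_sdiff_cancel_left (hdisj w hw)]
    exact congrArg (· \ s) huw
  rw [Icc_eq_image_powerset h, sum_image hinj]
  calc ∑ u ∈ (t \ s).powerset, (-1 : R) ^ ((s ∪ u).card - s.card)
      = ∑ u ∈ (t \ s).powerset, (-1 : R) ^ u.card :=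
        sum_congr rfl fun u hu => by rw [card_union_of_disjoint (hdisj u hu), add_tsub_cancel_left]
    _ = ((∑ u ∈ (t \ s).powerset, (-1 : ℤ) ^ u.card : ℤ) : R) := by push_cast; rfl
    _ = if s = t then 1 else 0 := by
        have hst : t \ s = ∅ ↔ s = t :=
          sdiff_eq_empty_iff_subset.trans ⟨subset_antisymm h, fun e => e ▸ subset_rfl⟩
        rw [sum_powerset_neg_one_pow_card]
        simp only [hst, apply_ite (Int.cast : ℤ → R), Int.cast_one, Int.cast_zero]

theorem sum_mul_sum_powerset_erase {R : Type*} [CommRing R] (T : Finset α) (c : α → R)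
    (f : Finset α → R) :
    ∑ j ∈ T, c j * ∑ S ∈ (T.erase j).powerset, f S =
      ∑ S ∈ T.powerset, (∑ j ∈ T \ S, c j) * f S := by
  simp_rw [mul_sum, sum_mul]
  refine sum_comm' fun j S => ?_
  simp only [mem_powerset, subset_erase, mem_sdiff]
  tauto

end Finset

section

variable [DecidableEq α] {ω : α → ℝ} {p : α → ℕ} {S T : Finset α} {i j : α}

theorem sum_powerset_unanimityCoeff (v : Finset α → ℝ) (M : Finset α) :
    ∑ S ∈ M.powerset, unanimityCoeff v S = v M := by
  unfold unanimityCoeff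
  rw [sum_comm' (t' := M.powerset) (s' := fun T => Icc T M) fun S T => by
    simp only [mem_powerset, mem_Icc]
    exact ⟨fun h => ⟨⟨h.2, h.1⟩, h.2.trans h.1⟩, fun h => ⟨h.1.2, h.1.1⟩⟩]
  simp_rw [← sum_mul]
  rw [sum_congr rfl fun T hT => by rw [sum_Icc_neg_one_pow_card_sub (mem_powerset.mp hT)]]
  simp [sum_ite_eq']

theorem sub_erase_eq_sum_unanimityCoeff (v : Finset α → ℝ) (T : Finset α) (i : α) :
    v T - v (T.erase i) = ∑ S ∈ T.powerset with i ∈ S, unanimityCoeff v S := by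
  have hps : (T.erase i).powerset = {S ∈ T.powerset | i ∉ S} := by
    ext S; simp [subset_erase]
  rw [← sum_powerset_unanimityCoeff v T, ← sum_powerset_unanimityCoeff v (T.erase i), hps,
    ← sum_filter_add_sum_filter_not T.powerset (i ∈ ·), add_sub_cancel_right]

theorem wbar_eq_zero_of_notMem (hi : i ∉ S) : wbar ω p S i = 0 :=
  if_neg fun h => hi h.1

theorem wbar_eq_zero_of_sup_lt (hsup : S.sup p < T.sup p) (hj : j ∈ S) : wbar ω p T j = 0 :=
  if_neg fun h => (le_sup hj).not_gt (h.2 ▸ hsup)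

theorem wbar_eq_of_sup_eq (hST : S ⊆ T) (hsup : S.sup p = T.sup p) (hj : j ∈ S) :
    wbar ω p T j = wbar ω p S j := by
  simp [wbar, hj, hST hj, hsup]

theorem wbarSum_pos (hω : ∀ i, 0 < ω i) (hS : S.Nonempty) : 0 < wbarSum ω p S := by
  obtain ⟨b, hb, hsup⟩ := exists_mem_eq_sup S hS p
  refine sum_pos' (fun j _ => ?_) ⟨b, hb, ?_⟩
  · unfold wbar; split_ifs <;> simp [(hω j).le]
  · rw [wbar, if_pos ⟨hb, hsup.symm⟩]; exact hω b

theorem wbar_div_wbarSum_mul_sum_wbar (hω : ∀ i, 0 < ω i) (hST : S ⊆ T) (hi : i ∈ S) :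
    wbar ω p S i / wbarSum ω p S * ∑ j ∈ S, wbar ω p T j = wbar ω p T i := by
  rcases (sup_mono hST : S.sup p ≤ T.sup p).lt_or_eq with hlt | heq
  · rw [sum_eq_zero fun j hj => wbar_eq_zero_of_sup_lt hlt hj, wbar_eq_zero_of_sup_lt hlt hi,
      mul_zero]
  · rw [sum_congr rfl fun j hj => wbar_eq_of_sup_eq hST heq hj, wbar_eq_of_sup_eq hST heq hi]
    exact div_mul_cancel₀ _ (wbarSum_pos hω ⟨i, hi⟩).ne'

theorem wbar_div_wbarSum_eq (hω : ∀ i, 0 < ω i) (hST : S ⊆ T) (hi : i ∈ S) :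
    wbar ω p S i / wbarSum ω p S =
      wbar ω p T i / wbarSum ω p T +
        (∑ j ∈ T \ S, wbar ω p T j / wbarSum ω p T) * (wbar ω p S i / wbarSum ω p S) := by
  have hT : wbarSum ω p T ≠ 0 := (wbarSum_pos hω ⟨i, hST hi⟩).ne'
  have hsplit : ∑ j ∈ T \ S, wbar ω p T j + ∑ j ∈ S, wbar ω p T j = wbarSum ω p T :=
    sum_sdiff hST
  rw [← sum_div, ← wbar_div_wbarSum_mul_sum_wbar hω hST hi]
  field_simp
  rw [← hsplit]
  ring

theorem wShapley_erase_self (v : Finset α → ℝ) (M : Finset α) (i : α) :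
    wShapley ω p v (M.erase i) i = 0 :=
  sum_eq_zero fun S hS => by
    rw [wbar_eq_zero_of_notMem fun hi => (subset_erase.mp (mem_powerset.mp hS)).2 hi,
      zero_div, zero_mul]

end

theorem weighted_shapley_subgame_recursion_general [DecidableEq α]
    (ω : α → ℝ) (hω : ∀ i, 0 < ω i) (p : α → ℕ) (v : Finset α → ℝ) (T : Finset α) (i : α) :
    wShapley ω p v T i =
      wbar ω p T i / wbarSum ω p T * (v T - v (T.erase i)) +
        ∑ j ∈ T.erase i, wbar ω p T j / wbarSum ω p T * wShapley ω p v (T.erase j) i := by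
  rw [sum_erase T (by rw [wShapley_erase_self, mul_zero]), sub_erase_eq_sum_unanimityCoeff]
  unfold wShapley
  rw [sum_mul_sum_powerset_erase, sum_filter, mul_sum, ← sum_add_distrib]
  refine sum_congr rfl fun S hS => ?_
  by_cases hiS : i ∈ S
  · rw [if_pos hiS]
    conv_lhs => rw [wbar_div_wbarSum_eq hω (mem_powerset.mp hS) hiS]
    ring
  · simp [hiS, wbar_eq_zero_of_notMem hiS]

/-- Recursion formula for the weighted Shapley values of the subgames:
`Φ^ω_{iT} = (ω̄^T_i/ω̄^T)(v(T)−v(T∖{i})) + ∑_{j ∈ T∖{i}} (ω̄^T_j/ω̄^T) Φ^ω_{i,T∖{j}}`. -/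
theorem weighted_shapley_subgame_recursion [Fintype α] [DecidableEq α]
    (ω : α → ℝ) (hω : ∀ i, 0 < ω i) (p : α → ℕ) (hp : ∀ i, 1 ≤ p i)
    (v : Finset α → ℝ) (hv : v ∅ = 0)
    (T : Finset α) (hT : T.Nonempty) (i : α) (hi : i ∈ T) :
    wShapley ω p v T i =
      wbar ω p T i / wbarSum ω p T * (v T - v (T.erase i)) +
        ∑ j ∈ T.erase i, wbar ω p T j / wbarSum ω p T * wShapley ω p v (T.erase j) i :=
  weighted_shapley_subgame_recursion_general ω hω p v T i

end
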